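/- For all real a and b, J₀(a)J₀(b) + 2∑_{q=1}^∞ (−1)^q J_{2q}(a)J_{2q}(b) = J₀(√(a² + b²)). -/

import Mathlib

open Real MeasureTheory

/-- Bessel function of the first kind of order `n`. -/
noncomputable def besselJ (n : ℕ) (x : ℝ) : ℝ :=
  ∑' m : ℕ, (-1 : ℝ) ^ m * (x / 2) ^ (2 * m + n) / (m.factorial * (m + n).factorial)

/-!
Put `r = a ^ 2 / 4`, `s = b ^ 2 / 4` and read the left side as
`∑_{q ∈ ℤ} (-1)^q J_{2|q|}(a) J_{2|q|}(b)`. Expanding both Bessel series and passing to the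
exponents `j = m + |q|`, `k = l + |q|` of `r` and `s`, the coefficient of `(-r)^j (-s)^k` becomes
`U(j, k) / ((2j)! (2k)!)` with `U(j, k) = ∑_q (-1)^q C(2j, j+q) C(2k, k+q)`. Pascal's rule gives
`U(j+1, k) = 4 U(j, k) - U(j, k+1)`, whence `U(j, k) = (2j)! (2k)! / (j! k! (j+k)!)`. The double
series `∑ (-r)^j (-s)^k / (j! k! (j+k)!)` then sums along antidiagonals, by the binomial theorem,
to `∑_n (-(r+s))^n / (n!)^2`, which is `J_0(√(a² + b²))`.
-/

open Finset
open scoped Nat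

section Shift

variable {α : Type*} [TopologicalSpace α] {D : ℤ → α}

lemma Summable.comp_sub_one [AddCommMonoid α] (hD : Summable D) : Summable fun t => D (t - 1) :=
  (Equiv.subRight (1 : ℤ)).summable_iff.mpr hD

lemma tsum_sub_comp_sub_one [AddCommGroup α] [IsTopologicalAddGroup α] [T2Space α]
    (hD : Summable D) : ∑' t, (D t - D (t - 1)) = 0 := by
  rw [hD.tsum_sub hD.comp_sub_one, sub_eq_zero]
  exact ((Equiv.subRight (1 : ℤ)).tsum_eq D).symm

end Shift

lemma HasSum.sum_antidiagonal {α A : Type*} [AddCommMonoid α] [TopologicalSpace α]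
    [ContinuousAdd α] [RegularSpace α] [AddMonoid A] [HasAntidiagonal A] {f : A × A → α} {a : α}
    (h : HasSum f a) :
    HasSum (fun n => ∑ p ∈ antidiagonal n, f p) a :=
  (HasAntidiagonal.sigmaAntidiagonalEquivProd.hasSum_iff.mpr h).sigma fun n =>
    (antidiagonal n).hasSum f

-- The guard matters: for `q < 0`, `q.toNat = 0` and `n.choose 0 = 1`.
def intChoose (n : ℕ) (q : ℤ) : ℝ := if 0 ≤ q then n.choose q.toNat else 0

lemma intChoose_of_neg {n : ℕ} {q : ℤ} (h : q < 0) : intChoose n q = 0 := by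
  simp [intChoose, h.not_ge]

lemma intChoose_of_lt {n : ℕ} {q : ℤ} (h : n < q) : intChoose n q = 0 := by
  rw [intChoose, if_pos (by omega), Nat.choose_eq_zero_of_lt (by omega), Nat.cast_zero]

lemma intChoose_natCast (n k : ℕ) : intChoose n k = n.choose k := by
  simp [intChoose]

lemma intChoose_succ (n : ℕ) (q : ℤ) :
    intChoose (n + 1) q = intChoose n (q - 1) + intChoose n q := by
  rcases lt_or_ge q 0 with hq | hq
  · simp [intChoose_of_neg, hq, show q - 1 < 0 by omega]
  · obtain ⟨k, rfl⟩ := Int.eq_ofNat_of_zero_le hq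
    cases k with
    | zero => simp [intChoose]
    | succ k =>
      rw [show ((k + 1 : ℕ) : ℤ) - 1 = k by push_cast; ring, intChoose_natCast, intChoose_natCast,
        intChoose_natCast, Nat.choose_succ_succ', Nat.cast_add]

def centeredChoose (j : ℕ) (t : ℤ) : ℝ := intChoose (2 * j) (j + t)

lemma centeredChoose_of_lt_natAbs {j : ℕ} {t : ℤ} (h : j < t.natAbs) :
    centeredChoose j t = 0 := by
  rcases lt_or_ge t 0 with ht | ht
  · exact intChoose_of_neg (by omega)
  · exact intChoose_of_lt (by push_cast; omega)

lemma centeredChoose_succ (j : ℕ) (t : ℤ) :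
    centeredChoose (j + 1) t =
      centeredChoose j (t - 1) + 2 * centeredChoose j t + centeredChoose j (t + 1) := by
  simp only [centeredChoose, show 2 * (j + 1) = 2 * j + 1 + 1 by ring, intChoose_succ]
  push_cast
  ring_nf

lemma centeredChoose_zero (t : ℤ) : centeredChoose 0 t = if t = 0 then 1 else 0 := by
  split_ifs with h
  · simp [h, centeredChoose, intChoose]
  · exact centeredChoose_of_lt_natAbs (by omega)

lemma centeredChoose_add_natAbs (m : ℕ) (q : ℤ) :
    centeredChoose (m + q.natAbs) q = (2 * (m + q.natAbs))! / (m ! * (m + 2 * q.natAbs)!) := by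
  have hm : m ≤ 2 * (m + q.natAbs) := by omega
  rcases Int.natAbs_eq q with hq | hq <;> set n := q.natAbs <;> rw [centeredChoose, hq]
  · rw [show ((m + n : ℕ) : ℤ) + n = ((2 * (m + n) - m : ℕ) : ℤ) by omega, intChoose_natCast,
      Nat.choose_symm hm, Nat.cast_choose ℝ hm, show 2 * (m + n) - m = m + 2 * n by omega]
  · rw [show ((m + n : ℕ) : ℤ) + -n = (m : ℤ) by omega, intChoose_natCast, Nat.cast_choose ℝ hm,
      show 2 * (m + n) - m = m + 2 * n by omega]

noncomputable def altConv (j k : ℕ) : ℝ :=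
  ∑' t : ℤ, (-1 : ℝ) ^ t * (centeredChoose j t * centeredChoose k t)

lemma summable_mul_centeredChoose (j : ℕ) (d : ℤ) (g : ℤ → ℝ) :
    Summable fun t => g t * centeredChoose j (t + d) := by
  refine summable_of_ne_finset_zero (s := Finset.Icc (-j - d) (j - d)) fun t ht => ?_
  rw [centeredChoose_of_lt_natAbs (by simp at ht; omega), mul_zero]

lemma hasSum_altConv (j k : ℕ) :
    HasSum (fun t : ℤ => (-1 : ℝ) ^ t * (centeredChoose j t * centeredChoose k t))
      (altConv j k) := by
  have h := summable_mul_centeredChoose k 0 fun t => (-1 : ℝ) ^ t * centeredChoose j t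
  simp only [add_zero, mul_assoc] at h
  exact h.hasSum

lemma altConv_succ_left (j k : ℕ) : altConv (j + 1) k = 4 * altConv j k - altConv j (k + 1) := by
  set c := centeredChoose
  set D : ℤ → ℝ := fun t => (-1 : ℝ) ^ t * (c j t * c k (t + 1) + c j (t + 1) * c k t)
  -- Pascal's rule twice on each side leaves the telescoping difference `D t - D (t - 1)`.
  have hterm : ∀ t, (-1 : ℝ) ^ t * (c (j + 1) t * c k t) =
      (4 * ((-1 : ℝ) ^ t * (c j t * c k t)) - (-1 : ℝ) ^ t * (c j t * c (k + 1) t)) +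
        (D t - D (t - 1)) := by
    intro t
    simp only [D, c, centeredChoose_succ, sub_add_cancel,
      zpow_sub_one₀ (by norm_num : (-1 : ℝ) ≠ 0)]
    ring
  have hsum : ∀ i l : ℕ, Summable fun t => (-1 : ℝ) ^ t * (c i t * c l t) :=
    fun i l => (hasSum_altConv i l).summable
  have hD : Summable D := by
    simp only [D, mul_add]
    refine .add ?_ ?_
    · simpa [mul_assoc] using summable_mul_centeredChoose k 1 fun t => (-1 : ℝ) ^ t * c j t
    · simpa [mul_assoc] using
        summable_mul_centeredChoose k 0 fun t => (-1 : ℝ) ^ t * c j (t + 1)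
  rw [altConv, tsum_congr hterm, (((hsum j k).mul_left 4).sub (hsum j (k + 1))).tsum_add
    (hD.sub hD.comp_sub_one), tsum_sub_comp_sub_one hD,
    ((hsum j k).mul_left 4).tsum_sub (hsum j (k + 1)), tsum_mul_left, add_zero, altConv, altConv]

lemma altConv_zero_left (k : ℕ) : altConv 0 k = (2 * k).choose k := by
  rw [altConv, tsum_eq_single 0 fun t ht => by simp [centeredChoose_zero, ht]]
  simp [centeredChoose, intChoose]

lemma altConv_eq (j k : ℕ) : altConv j k = (2 * j)! * (2 * k)! / (j ! * k ! * (j + k)!) := by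
  induction j generalizing k with
  | zero =>
    rw [altConv_zero_left, Nat.cast_choose ℝ (by omega : k ≤ 2 * k), show 2 * k - k = k by omega]
    simp
  | succ j ih =>
    rw [altConv_succ_left, ih, ih, show 2 * (j + 1) = 2 * j + 1 + 1 by ring, show 2 * (k + 1) = 2 * k + 1 + 1 by ring,
      show j + (k + 1) = j + k + 1 by ring, show j + 1 + k = j + k + 1 by ring]
    push_cast [Nat.factorial_succ]
    field_simp
    ring

noncomputable def evenBesselTerm (c : ℝ) (q m : ℕ) : ℝ :=
  (-1) ^ m * c ^ (m + q) / (m ! * (m + 2 * q)!)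

lemma abs_evenBesselTerm_le (c : ℝ) (q m : ℕ) :
    |evenBesselTerm c q m| ≤ |c| ^ q / q ! * (|c| ^ m / m !) := by
  have hfac : (q ! : ℝ) ≤ (m + 2 * q)! := by exact_mod_cast Nat.factorial_le (by omega)
  simp only [evenBesselTerm, abs_div, abs_mul, abs_pow, abs_neg, abs_one, one_pow, one_mul,
    Nat.abs_cast]
  rw [div_mul_div_comm, pow_add, mul_comm (|c| ^ q), mul_comm (q ! : ℝ)]
  gcongr

lemma summable_norm_evenBesselTerm (c : ℝ) (q : ℕ) :
    Summable fun m => ‖evenBesselTerm c q m‖ :=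
  .of_nonneg_of_le (fun _ => norm_nonneg _) (abs_evenBesselTerm_le c q)
    ((Real.summable_pow_div_factorial |c|).mul_left (|c| ^ q / q !))

lemma hasSum_evenBesselTerm (q : ℕ) (x : ℝ) :
    HasSum (evenBesselTerm (x ^ 2 / 4) q) (besselJ (2 * q) x) := by
  have hseries : besselJ (2 * q) x = ∑' m, evenBesselTerm (x ^ 2 / 4) q m :=
    tsum_congr fun m => by
      rw [evenBesselTerm, show 2 * m + 2 * q = 2 * (m + q) by ring, pow_mul, div_pow]
      norm_num
  rw [hseries]
  exact (summable_norm_evenBesselTerm _ q).of_norm.hasSum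

section BesselProduct

variable (r s : ℝ)

noncomputable def besselProductTerm (x : ℤ × ℕ × ℕ) : ℝ :=
  (-1) ^ x.1 * (evenBesselTerm r x.1.natAbs x.2.1 * evenBesselTerm s x.1.natAbs x.2.2)

lemma summable_besselProductTerm : Summable (besselProductTerm r s) := by
  set e : ℕ → ℝ → ℝ := fun n c => (|c| ^ n / n !)
  have he : ∀ c, Summable (e · c) := fun c => Real.summable_pow_div_factorial |c|
  have he_nonneg : ∀ n c, 0 ≤ e n c := fun n c => by positivity
  have hdiag : Summable fun n => e n r * e n s :=
    .of_nonneg_of_le (fun n => by positivity)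
      (fun n => mul_le_mul_of_nonneg_left (Real.pow_div_factorial_le_exp _ (abs_nonneg s) n)
        (he_nonneg n r))
      ((he r).mul_right _)
  have hdiagℤ : Summable fun q : ℤ => e q.natAbs r * e q.natAbs s :=
    .of_nat_of_neg (by simpa using hdiag) (by simpa using hdiag)
  refine .of_norm_bounded (hdiagℤ.mul_of_nonneg ((he r).mul_of_nonneg (he s)
    (he_nonneg · r) (he_nonneg · s)) (fun q => by positivity) (fun p => by positivity)) ?_
  rintro ⟨q, m, l⟩
  rw [Real.norm_eq_abs, besselProductTerm, abs_mul, abs_neg_one_zpow, one_mul, abs_mul]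
  calc |evenBesselTerm r q.natAbs m| * |evenBesselTerm s q.natAbs l|
      ≤ e q.natAbs r * e m r * (e q.natAbs s * e l s) :=
        mul_le_mul (abs_evenBesselTerm_le _ _ _) (abs_evenBesselTerm_le _ _ _) (abs_nonneg _)
          (by positivity)
    _ = _ := by ring

lemma hasSum_besselProductTerm_fiberwise (a b : ℝ) :
    HasSum (fun q : ℤ => (-1) ^ q * (besselJ (2 * q.natAbs) a * besselJ (2 * q.natAbs) b))
      (∑' x, besselProductTerm (a ^ 2 / 4) (b ^ 2 / 4) x) := by
  refine (summable_besselProductTerm _ _).hasSum.prod_fiberwise fun q => ?_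
  have hfiber := (hasSum_evenBesselTerm q.natAbs a).mul (hasSum_evenBesselTerm q.natAbs b)
    (summable_mul_of_summable_norm (summable_norm_evenBesselTerm _ _)
      (summable_norm_evenBesselTerm _ _))
  exact hfiber.mul_left ((-1) ^ q)

end BesselProduct

section Regrouping

variable (r s : ℝ)

-- With `j = m + |q|`, the factor `1 / (m! (m + 2|q|)!)` of `besselProductTerm` is
-- `C(2j, j + q) / (2j)!`.
noncomputable def regroupedTerm (x : (ℕ × ℕ) × ℤ) : ℝ :=
  (-1) ^ (x.1.1 + x.1.2) * r ^ x.1.1 * s ^ x.1.2 / ((2 * x.1.1)! * (2 * x.1.2)!) *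
    ((-1) ^ x.2 * (centeredChoose x.1.1 x.2 * centeredChoose x.1.2 x.2))

def regroupIndex (x : ℤ × ℕ × ℕ) : (ℕ × ℕ) × ℤ :=
  ((x.2.1 + x.1.natAbs, x.2.2 + x.1.natAbs), x.1)

lemma regroupIndex_injective : regroupIndex.Injective := by
  rintro ⟨q, m, l⟩ ⟨q', m', l'⟩ h
  simp only [regroupIndex, Prod.mk.injEq] at h
  obtain ⟨⟨hm, hl⟩, rfl⟩ := h
  obtain rfl : m = m' := by omega
  obtain rfl : l = l' := by omega
  rfl

lemma regroupedTerm_regroupIndex (x : ℤ × ℕ × ℕ) :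
    regroupedTerm r s (regroupIndex x) = besselProductTerm r s x := by
  obtain ⟨q, m, l⟩ := x
  simp only [regroupedTerm, regroupIndex, besselProductTerm, evenBesselTerm,
    centeredChoose_add_natAbs]
  rw [show m + q.natAbs + (l + q.natAbs) = m + l + 2 * q.natAbs by ring, pow_add, pow_mul,
    neg_one_sq, one_pow, mul_one, pow_add]
  field_simp

lemma regroupedTerm_eq_zero {x : (ℕ × ℕ) × ℤ} (hx : x ∉ Set.range regroupIndex) :
    regroupedTerm r s x = 0 := by
  obtain ⟨⟨j, k⟩, q⟩ := x
  have hq : j < q.natAbs ∨ k < q.natAbs := by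
    by_contra! h
    exact hx ⟨(q, j - q.natAbs, k - q.natAbs), by simp only [regroupIndex]; congr <;> omega⟩
  rcases hq with hq | hq <;> simp [regroupedTerm, centeredChoose_of_lt_natAbs hq]

lemma hasSum_regroupedTerm : HasSum (regroupedTerm r s) (∑' x, besselProductTerm r s x) := by
  rw [← regroupIndex_injective.hasSum_iff fun _ => regroupedTerm_eq_zero r s]
  simpa only [Function.comp_def, regroupedTerm_regroupIndex] using
    (summable_besselProductTerm r s).hasSum

lemma hasSum_regroupedTerm_fiber (j k : ℕ) :
    HasSum (fun q => regroupedTerm r s ((j, k), q))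
      ((-1) ^ (j + k) * r ^ j * s ^ k / (j ! * k ! * (j + k)!)) := by
  have hval : (-1) ^ (j + k) * r ^ j * s ^ k / (j ! * k ! * (j + k)! : ℝ) =
      (-1) ^ (j + k) * r ^ j * s ^ k / ((2 * j)! * (2 * k)!) * altConv j k := by
    rw [altConv_eq]
    field_simp
  rw [hval]
  exact (hasSum_altConv j k).mul_left _

end Regrouping

lemma sum_antidiagonal_eq_evenBesselTerm (r s : ℝ) (n : ℕ) :
    ∑ p ∈ antidiagonal n, (-1) ^ (p.1 + p.2) * r ^ p.1 * s ^ p.2 / (p.1 ! * p.2 ! * (p.1 + p.2)!) =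
      evenBesselTerm (r + s) 0 n := by
  rw [evenBesselTerm, add_zero, mul_zero, add_zero, (Commute.all r s).add_pow', Finset.mul_sum,
    Finset.sum_div]
  refine Finset.sum_congr rfl fun p hp => ?_
  rw [HasAntidiagonal.mem_antidiagonal] at hp
  subst hp
  rw [nsmul_eq_mul, Nat.cast_add_choose]
  field_simp

lemma hasSum_neg_one_zpow_mul_besselJ_mul_besselJ (a b : ℝ) :
    HasSum (fun q : ℤ => (-1) ^ q * (besselJ (2 * q.natAbs) a * besselJ (2 * q.natAbs) b))
      (besselJ 0 (√(a ^ 2 + b ^ 2))) := by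
  have hJ0 :
      HasSum (evenBesselTerm (a ^ 2 / 4 + b ^ 2 / 4) 0) (besselJ 0 (√(a ^ 2 + b ^ 2))) := by
    have h := hasSum_evenBesselTerm 0 (√(a ^ 2 + b ^ 2))
    rwa [Real.sq_sqrt (by positivity), add_div] at h
  have htotal := ((hasSum_regroupedTerm (a ^ 2 / 4) (b ^ 2 / 4)).prod_fiberwise
    (fun p => hasSum_regroupedTerm_fiber _ _ p.1 p.2)).sum_antidiagonal
  simp only [sum_antidiagonal_eq_evenBesselTerm] at htotal
  rw [hJ0.unique htotal]
  exact hasSum_besselProductTerm_fiberwise a b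

theorem graf_type_identity (a b : ℝ) :
    besselJ 0 a * besselJ 0 b +
        2 * ∑' q : ℕ,
          (-1 : ℝ) ^ (q + 1) * besselJ (2 * (q + 1)) a * besselJ (2 * (q + 1)) b =
      besselJ 0 (Real.sqrt (a ^ 2 + b ^ 2)) := by
  set F : ℤ → ℝ := fun q => (-1) ^ q * (besselJ (2 * q.natAbs) a * besselJ (2 * q.natAbs) b)
  have h : HasSum F _ := hasSum_neg_one_zpow_mul_besselJ_mul_besselJ a b
  have heven : F.Even := fun q => by
    simp only [F, Int.natAbs_neg, zpow_neg, ← inv_zpow, inv_neg_one]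
  rw [← h.tsum_eq, tsum_int_eq_zero_add_two_mul_tsum_pnat heven h.summable,
    tsum_pnat_eq_tsum_succ (f := fun n : ℕ => F n)]
  simp only [F, Int.natAbs_natCast, zpow_natCast, Int.natAbs_zero, zpow_zero, mul_zero, one_mul,
    nsmul_eq_mul, Nat.cast_ofNat, mul_assoc]
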